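/- Let V = λI + Σ_{s} x_s x_sᵀ be a d×d positive definite matrix with λ > 0, and suppose among the vectors x_s the fixed vector x ∈ ℝ^d appears at least m times. Then xᵀV⁻¹x ≤ ‖x‖²/(λ + m‖x‖²). -/

import Mathlib

open Matrix

/-- LinUCB radius shrinkage: if the feature `x` appears at least `m` times among
the design vectors, then `xᵀV⁻¹x ≤ ‖x‖²/(λ + m‖x‖²)`. -/
theorem linucb_radius_shrinkage {d : ℕ} {ι : Type*} [Fintype ι] [DecidableEq ι]
    (lam : ℝ) (hlam : 0 < lam) (xs : ι → Fin d → ℝ) (x : Fin d → ℝ)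
    (V : Matrix (Fin d) (Fin d) ℝ)
    (hV : V = lam • (1 : Matrix (Fin d) (Fin d) ℝ) +
      ∑ s : ι, vecMulVec (xs s) (xs s))
    (m : ℕ) (S : Finset ι) (hScard : m ≤ S.card) (hSx : ∀ s ∈ S, xs s = x) :
    x ⬝ᵥ V⁻¹ *ᵥ x ≤ (∑ j, x j ^ 2) / (lam + m * ∑ j, x j ^ 2) := by
  classical
  set X : ℝ := ∑ j, x j ^ 2 with hXdef
  have hX0 : 0 ≤ X := Finset.sum_nonneg fun j _ => sq_nonneg _
  have hmv : ∀ y : Fin d → ℝ, V *ᵥ y = lam • y + ∑ s : ι, (xs s ⬝ᵥ y) • xs s := by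
    intro y
    rw [hV, Matrix.add_mulVec, Matrix.smul_mulVec, Matrix.one_mulVec]
    congr 1
    ext i
    simp only [Matrix.mulVec, dotProduct, Finset.sum_apply, Matrix.sum_apply,
      vecMulVec_apply, Finset.sum_mul, Pi.smul_apply, smul_eq_mul]
    rw [Finset.sum_comm]
    refine Finset.sum_congr rfl fun s _ => ?_
    refine Finset.sum_congr rfl fun j _ => by ring
  have hquad : ∀ y : Fin d → ℝ, y ⬝ᵥ V *ᵥ y
      = lam * (y ⬝ᵥ y) + ∑ s : ι, (xs s ⬝ᵥ y) ^ 2 := by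
    intro y
    have hds : ∀ (f : ι → Fin d → ℝ), y ⬝ᵥ (∑ s : ι, f s) = ∑ s : ι, y ⬝ᵥ f s := by
      intro f
      simp only [dotProduct, Finset.sum_apply, Finset.mul_sum]
      rw [Finset.sum_comm]
    have h1 : y ⬝ᵥ lam • y = lam * (y ⬝ᵥ y) := by
      simp only [dotProduct, Finset.mul_sum, Pi.smul_apply, smul_eq_mul]
      exact Finset.sum_congr rfl fun i _ => by ring
    rw [hmv y, dotProduct_add, hds, h1]
    congr 1
    refine Finset.sum_congr rfl fun s _ => ?_
    rw [dotProduct_smul, smul_eq_mul, dotProduct_comm, sq]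
  have hPD : V.PosDef := by
    rw [Matrix.posDef_iff_dotProduct_mulVec]
    constructor
    · rw [Matrix.IsHermitian]
      ext i j
      simp [hV, Matrix.conjTranspose_apply, Matrix.one_apply, vecMulVec_apply,
        Matrix.sum_apply, mul_comm, eq_comm]
    · intro y hy
      have hstar : star y = y := funext fun i => star_trivial _
      rw [hstar, hquad y]
      have hy2 : 0 < y ⬝ᵥ y := by
        rcases Function.ne_iff.mp hy with ⟨j, hj⟩
        have : y ⬝ᵥ y = ∑ j, y j ^ 2 := by simp [dotProduct, sq]
        rw [this]
        have hj' : y j ≠ 0 := by simpa using hj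
        exact Finset.sum_pos' (fun i _ => sq_nonneg _)
          ⟨j, Finset.mem_univ j, by positivity⟩
      have hsum : 0 ≤ ∑ s : ι, (xs s ⬝ᵥ y) ^ 2 := Finset.sum_nonneg fun s _ => sq_nonneg _
      nlinarith
  have hdet : IsUnit V.det := hPD.det_pos.ne'.isUnit
  set u : Fin d → ℝ := V⁻¹ *ᵥ x with hu
  have hVu : V *ᵥ u = x := by
    rw [hu, Matrix.mulVec_mulVec, Matrix.mul_nonsing_inv _ hdet, Matrix.one_mulVec]
  set t : ℝ := x ⬝ᵥ u with ht
  have hteq : t = lam * (u ⬝ᵥ u) + ∑ s : ι, (xs s ⬝ᵥ u) ^ 2 := by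
    rw [ht, ← hVu, dotProduct_comm, hquad u]
  have hsumS : (m : ℝ) * t ^ 2 ≤ ∑ s : ι, (xs s ⬝ᵥ u) ^ 2 := by
    have h1 : ∑ s ∈ S, (xs s ⬝ᵥ u) ^ 2 = S.card * t ^ 2 := by
      rw [Finset.sum_congr rfl fun s hs => by rw [hSx s hs, ← ht]]
      simp [mul_comm]
    calc (m : ℝ) * t ^ 2 ≤ S.card * t ^ 2 := by
          apply mul_le_mul_of_nonneg_right _ (sq_nonneg _)
          exact_mod_cast hScard
      _ = ∑ s ∈ S, (xs s ⬝ᵥ u) ^ 2 := h1.symm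
      _ ≤ ∑ s : ι, (xs s ⬝ᵥ u) ^ 2 :=
          Finset.sum_le_univ_sum_of_nonneg fun s => sq_nonneg _
  have hkey : lam * (u ⬝ᵥ u) + (m : ℝ) * t ^ 2 ≤ t := by
    conv_rhs => rw [hteq]
    linarith
  have hcs : t ^ 2 ≤ X * (u ⬝ᵥ u) := by
    have h2 := Finset.sum_mul_sq_le_sq_mul_sq Finset.univ x u
    have hu2 : u ⬝ᵥ u = ∑ j, u j ^ 2 := by simp [dotProduct, sq]
    rw [ht, hu2]
    simpa [dotProduct, hXdef] using h2
  have hu20 : 0 ≤ u ⬝ᵥ u := by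
    have : u ⬝ᵥ u = ∑ j, u j ^ 2 := by simp [dotProduct, sq]
    rw [this]; exact Finset.sum_nonneg fun j _ => sq_nonneg _
  show t ≤ X / (lam + m * X)
  rcases eq_or_lt_of_le hX0 with hX | hXpos
  · have hx0 : x = 0 := by
      funext j
      have := (Finset.sum_eq_zero_iff_of_nonneg
        (fun j _ => sq_nonneg (x j))).mp hX.symm j (Finset.mem_univ j)
      exact pow_eq_zero_iff (two_ne_zero) |>.mp this
    rw [← hX]
    simp [ht, hx0]
  · have hA : 0 < lam + (m : ℝ) * X := by positivity
    rw [le_div_iff₀ hA]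
    nlinarith [mul_le_mul_of_nonneg_left hkey hX0,
      mul_le_mul_of_nonneg_left hcs hlam.le,
      sq_nonneg ((lam + (m : ℝ) * X) * t - X),
      mul_le_mul_of_nonneg_left hcs (mul_nonneg (Nat.cast_nonneg m) hX0)]
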